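/- arXiv:2512.07157 — 2 statements merged into one kernel-verified Lean document; each statement's English description precedes it below -/
import Mathlib

section
/- For every $i \geq 1$, the annihilator $J_i = \operatorname{ann}_S H^i(G, R)$ of the group cohomology module $H^i(G, R)$ is a nonzero ideal of $S$. -/
/-!
For `u ∈ R` the transfer `Tr(u) = ∑_{g ∈ G} g u ∈ S` acts on `R` as `∑_g g⁻¹ ∘ (u · -) ∘ g`, so
multiplication by `Tr(u)` factors `G`-equivariantly through the coinduced module `Coind_1^G R`,
whose positive-degree cohomology vanishes. Hence `Tr(u) ∈ J_i` for `i ≥ 1`. Since `G` acts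
faithfully on the domain `R`, Dedekind's independence of characters gives `u` with `Tr(u) ≠ 0`.
-/

set_option linter.unusedSectionVars false

open MvPolynomial

noncomputable section

variable (𝔽 : Type) [Field 𝔽] [Fintype 𝔽] [DecidableEq 𝔽] (d : ℕ)

/-- The polynomial ring `R = 𝔽_q[V] = Sym(V^*)`, realized as a polynomial ring in `d`
variables (the variables `X i` forming a basis of `V^*`). -/
abbrev PolyR := MvPolynomial (Fin d) 𝔽

/-- The linear form in `V^* ⊆ R` with coefficient vector `c`. -/
def linForm (c : Fin d → 𝔽) : PolyR 𝔽 d := ∑ i, MvPolynomial.C (c i) * X i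

/-- The action of `g ∈ GL(V)` on `R = Sym(V^*)`, induced by the (contragredient) action
of `GL(V)` on linear forms: the linear form with coefficient vector `c` is sent to the
linear form with coefficient vector `c ⬝ g⁻¹`. -/
def glAct (g : GL (Fin d) 𝔽) : PolyR 𝔽 d →ₐ[𝔽] PolyR 𝔽 d :=
  aeval fun i => linForm 𝔽 d fun j => ((g⁻¹ : GL (Fin d) 𝔽) : Matrix (Fin d) (Fin d) 𝔽) i j

lemma glAct_one : glAct 𝔽 d 1 = AlgHom.id 𝔽 (PolyR 𝔽 d) := by
  apply MvPolynomial.algHom_ext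
  intro i
  simp [glAct, linForm, Matrix.one_apply, apply_ite MvPolynomial.C, ite_mul,
    Finset.sum_ite_eq]

lemma glAct_mul (g h : GL (Fin d) 𝔽) :
    glAct 𝔽 d (g * h) = (glAct 𝔽 d g).comp (glAct 𝔽 d h) := by
  apply MvPolynomial.algHom_ext
  intro i
  simp only [glAct, aeval_X, AlgHom.comp_apply, linForm, map_sum, map_mul, aeval_C, aeval_X,
    mul_inv_rev, Units.val_mul, Matrix.mul_apply, algebraMap_eq, Finset.mul_sum, C_mul,
    Finset.sum_mul]
  rw [Finset.sum_comm]
  simp [mul_assoc]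

variable (G : Subgroup (GL (Fin d) 𝔽))

/-- The invariant ring `S = R^G`. -/
def invS : Subalgebra 𝔽 (PolyR 𝔽 d) :=
  ⨅ g ∈ G, AlgHom.equalizer (glAct 𝔽 d g) (AlgHom.id 𝔽 (PolyR 𝔽 d))

lemma mem_invS (r : PolyR 𝔽 d) : r ∈ invS 𝔽 d G ↔ ∀ g ∈ G, glAct 𝔽 d g r = r := by
  simp [invS, Algebra.mem_iInf, AlgHom.mem_equalizer]

/-- `R` as a representation of `G` over `S = R^G` (the `G`-action on `R` is `S`-linear). -/
def invRep : Representation (invS 𝔽 d G) G (PolyR 𝔽 d) where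
  toFun g :=
    { toFun := glAct 𝔽 d g
      map_add' := by simp
      map_smul' := by
        intro s r
        have hs : glAct 𝔽 d (g : GL (Fin d) 𝔽) (s : PolyR 𝔽 d) = (s : PolyR 𝔽 d) :=
          (mem_invS 𝔽 d G _).mp s.2 g g.2
        simp only [Algebra.smul_def, map_mul, RingHom.id_apply]
        rw [show (algebraMap (invS 𝔽 d G) (PolyR 𝔽 d)) s = (s : PolyR 𝔽 d) from rfl, hs] }
  map_one' := LinearMap.ext fun r => by
    show glAct 𝔽 d ((1 : G) : GL (Fin d) 𝔽) r = r
    rw [OneMemClass.coe_one, glAct_one]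
    rfl
  map_mul' := fun g h => LinearMap.ext fun r => by
    show glAct 𝔽 d ((g * h : G) : GL (Fin d) 𝔽) r = glAct 𝔽 d g (glAct 𝔽 d h r)
    rw [MulMemClass.coe_mul, glAct_mul]
    rfl

/-- The `i`-th group cohomology `H^i(G, R)`, as a module over `S = R^G`. -/
def cohGR (i : ℕ) : ModuleCat (invS 𝔽 d G) := groupCohomology (Rep.of (invRep 𝔽 d G)) i

/-- `J_i`, the annihilator of `H^i(G, R)` in `S`. -/
def annJ (i : ℕ) : Ideal (invS 𝔽 d G) := Module.annihilator (invS 𝔽 d G) (cohGR 𝔽 d G i)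

/-- The top Dickson class `𝐝_{d,0} = ∏_{0 ≠ v ∈ V^*} v ∈ R`. -/
def dickson : PolyR 𝔽 d := ∏ c ∈ Finset.univ.filter (fun c : Fin d → 𝔽 => c ≠ 0), linForm 𝔽 d c


lemma glAct_linForm (g : GL (Fin d) 𝔽) (c : Fin d → 𝔽) :
    glAct 𝔽 d g (linForm 𝔽 d c) =
      linForm 𝔽 d (Matrix.vecMul c ((g⁻¹ : GL (Fin d) 𝔽) : Matrix (Fin d) (Fin d) 𝔽)) := by
  simp only [glAct, linForm, map_sum, map_mul, aeval_C, aeval_X, algebraMap_eq,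
    Matrix.vecMul, dotProduct, map_sum, C_mul, Finset.mul_sum, Finset.sum_mul]
  rw [Finset.sum_comm]
  simp [mul_assoc]

lemma glAct_dickson (g : GL (Fin d) 𝔽) : glAct 𝔽 d g (dickson 𝔽 d) = dickson 𝔽 d := by
  unfold dickson
  rw [map_prod]
  simp only [glAct_linForm]
  refine Finset.prod_bij'
    (fun c _ => Matrix.vecMul c ((g⁻¹ : GL (Fin d) 𝔽) : Matrix (Fin d) (Fin d) 𝔽))
    (fun c _ => Matrix.vecMul c ((g : GL (Fin d) 𝔽) : Matrix (Fin d) (Fin d) 𝔽))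
    ?_ ?_ ?_ ?_ ?_
  · intro c hc
    simp only [Finset.mem_filter, Finset.mem_univ, true_and] at hc ⊢
    intro h0
    apply hc
    have h2 := congrArg
      (fun v => Matrix.vecMul v ((g : GL (Fin d) 𝔽) : Matrix (Fin d) (Fin d) 𝔽)) h0
    simp only [Matrix.vecMul_vecMul, Matrix.zero_vecMul, ← Units.val_mul, inv_mul_cancel,
      Units.val_one, Matrix.vecMul_one] at h2
    exact h2
  · intro c hc
    simp only [Finset.mem_filter, Finset.mem_univ, true_and] at hc ⊢
    intro h0
    apply hc
    have h2 := congrArg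
      (fun v => Matrix.vecMul v ((g⁻¹ : GL (Fin d) 𝔽) : Matrix (Fin d) (Fin d) 𝔽)) h0
    simp only [Matrix.vecMul_vecMul, Matrix.zero_vecMul, ← Units.val_mul, mul_inv_cancel,
      Units.val_one, Matrix.vecMul_one] at h2
    exact h2
  · intro c hc
    simp only [Matrix.vecMul_vecMul, ← Units.val_mul, inv_mul_cancel, Units.val_one,
      Matrix.vecMul_one]
  · intro c hc
    simp only [Matrix.vecMul_vecMul, ← Units.val_mul, mul_inv_cancel, Units.val_one,
      Matrix.vecMul_one]
  · intro c hc
    rfl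

/-- The top Dickson class as an element of the invariant ring `S = R^G`. -/
def dicksonS : invS 𝔽 d G :=
  ⟨dickson 𝔽 d, (mem_invS 𝔽 d G _).mpr fun g _ => glAct_dickson 𝔽 d g⟩

section CharacterIndependence

variable {ι M L : Type*} [Fintype ι] [Nonempty ι] [Monoid M] [CommRing L] [IsDomain L]

theorem exists_sum_monoidHom_apply_ne_zero (σ : ι → M →* L) (hσ : Function.Injective σ) :
    ∃ m, ∑ i, σ i m ≠ 0 := by
  by_contra! hsum
  have hli := (linearIndependent_monoidHom M L).comp σ hσ
  have h := Fintype.linearIndependent_iff.mp hli (fun _ => 1)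
    (funext fun m => by simpa [Finset.sum_apply] using hsum m) (Classical.arbitrary ι)
  exact one_ne_zero h

end CharacterIndependence

universe u

namespace Rep

open CategoryTheory

variable {k Γ : Type u} [CommRing k] [Group Γ] (A : Rep.{u} k Γ)

/-- The representation coinduced from the trivial subgroup, i.e. `Γ → A` with `Γ` acting by
right translation. -/
abbrev coindBot : Rep k Γ :=
  coind (⊥ : Subgroup Γ).subtype (res (⊥ : Subgroup Γ).subtype A)

def toCoindBot (ψ : A.V →ₗ[k] A.V) : A ⟶ coindBot A :=
  ofHom
    { toFun a := ⟨fun h => ψ (A.ρ h a), fun s h => by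
        rw [show s = 1 from Subsingleton.elim _ _]; simp⟩
      map_add' _ _ := by ext; simp
      map_smul' _ _ := by ext; simp
      isIntertwining' g := by
        ext a h
        simp [LinearMap.funLeft, Module.End.mul_apply] }

def ofCoindBot [Fintype Γ] : coindBot A ⟶ A :=
  ofHom
    { toFun F := ∑ h, A.ρ h⁻¹ (F.1 h)
      map_add' _ _ := by simp [Finset.sum_add_distrib]
      map_smul' _ _ := by simp [Finset.smul_sum]
      isIntertwining' g := by
        ext F
        change ∑ h, A.ρ h⁻¹ (F.1 (h * g)) = A.ρ g (∑ h, A.ρ h⁻¹ (F.1 h))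
        rw [map_sum]
        exact Fintype.sum_equiv (Equiv.mulRight g) _ _ fun h => by
          simp [← Module.End.mul_apply, ← map_mul] }

lemma toCoindBot_comp_ofCoindBot_apply [Fintype Γ] (ψ : A.V →ₗ[k] A.V) (a : A) :
    (toCoindBot A ψ ≫ ofCoindBot A) a = ∑ h, A.ρ h⁻¹ (ψ (A.ρ h a)) := rfl

end Rep

namespace groupCohomology

open CategoryTheory

variable {k Γ : Type u} [CommRing k] [Group Γ]

lemma isZero_coindBot_succ (A : Rep.{u} k Γ) (n : ℕ) :
    Limits.IsZero (groupCohomology (Rep.coindBot A) (n + 1)) :=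
  (isZero_groupCohomology_succ_of_subsingleton _ n).of_iso (coindIso _ _)

lemma map_id_apply_eq_smul {A : Rep.{u} k Γ} (c : k) (φ : A ⟶ A) (hφ : ∀ a, φ a = c • a)
    (n : ℕ) (x : groupCohomology A n) : map (MonoidHom.id Γ) φ n x = c • x := by
  induction x using groupCohomology_induction_on with
  | h z =>
    rw [π_map_apply, ← map_smul]
    congr 1
    apply (ModuleCat.mono_iff_injective (iCocycles A n)).1 inferInstance
    rw [map_smul, ← ConcreteCategory.comp_apply, HomologicalComplex.cyclesMap_i,
      ConcreteCategory.comp_apply]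
    ext g
    simp [cochainsMap_id_f_hom_eq_compLeft, hφ]

/-- `c • -` factors as `toCoindBot A ψ ≫ ofCoindBot A`, and the coinduced module has no higher
cohomology by Shapiro's lemma. -/
theorem mem_annihilator_of_smul_eq_sum_conj [Fintype Γ] (A : Rep.{u} k Γ) (c : k)
    (ψ : A.V →ₗ[k] A.V) (hc : ∀ a, c • a = ∑ h, A.ρ h⁻¹ (ψ (A.ρ h a))) (n : ℕ) :
    c ∈ Module.annihilator k (groupCohomology A (n + 1)) := by
  rw [Module.mem_annihilator]
  intro x
  have hφ : ∀ a, (Rep.toCoindBot A ψ ≫ Rep.ofCoindBot A) a = c • a := fun a =>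
    (hc a).symm ▸ Rep.toCoindBot_comp_ofCoindBot_apply A ψ a
  rw [← map_id_apply_eq_smul c _ hφ, map_id_comp, ConcreteCategory.comp_apply,
    (isZero_coindBot_succ A n).eq_zero_of_tgt (map (MonoidHom.id Γ) (Rep.toCoindBot A ψ) (n + 1))]
  simp

end groupCohomology

lemma glAct_X (g : GL (Fin d) 𝔽) (i : Fin d) :
    glAct 𝔽 d g (X i) =
      linForm 𝔽 d fun j => ((g⁻¹ : GL (Fin d) 𝔽) : Matrix (Fin d) (Fin d) 𝔽) i j :=
  aeval_X _ i

lemma linForm_injective : Function.Injective (linForm 𝔽 d) := by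
  intro c c' h
  funext j
  simpa [linForm, coeff_sum, coeff_C_mul, coeff_X, Finsupp.single_left_inj one_ne_zero,
    Finset.sum_ite_eq'] using congrArg (coeff (Finsupp.single j 1)) h

lemma glAct_injective : Function.Injective (glAct 𝔽 d) := by
  intro g h hgh
  refine inv_injective (Units.ext (Matrix.ext fun i j => ?_))
  exact congrFun (linForm_injective 𝔽 d (by rw [← glAct_X, ← glAct_X, hgh])) j

lemma exists_sum_glAct_ne_zero [Fintype G] : ∃ u, ∑ g : G, glAct 𝔽 d g u ≠ 0 :=
  exists_sum_monoidHom_apply_ne_zero (fun g : G => (glAct 𝔽 d g : PolyR 𝔽 d →* PolyR 𝔽 d))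
    fun _ _ hgh => Subtype.ext <| glAct_injective 𝔽 d <| AlgHom.ext (DFunLike.congr_fun hgh :)

lemma sum_glAct_mem_invS [Fintype G] (u : PolyR 𝔽 d) :
    ∑ g : G, glAct 𝔽 d g u ∈ invS 𝔽 d G := by
  refine (mem_invS 𝔽 d G _).mpr fun g hg => ?_
  rw [map_sum]
  exact Fintype.sum_equiv (Equiv.mulLeft ⟨g, hg⟩) _ _ fun h => by
    rw [← AlgHom.comp_apply, ← glAct_mul]; rfl

def invTransfer [Fintype G] (u : PolyR 𝔽 d) : invS 𝔽 d G := ⟨_, sum_glAct_mem_invS 𝔽 d G u⟩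

lemma invTransfer_mem_annJ [Fintype G] (u : PolyR 𝔽 d) (n : ℕ) :
    invTransfer 𝔽 d G u ∈ annJ 𝔽 d G (n + 1) := by
  refine groupCohomology.mem_annihilator_of_smul_eq_sum_conj (Rep.of (invRep 𝔽 d G)) _
    (LinearMap.mulLeft (invS 𝔽 d G) u) (fun r => ?_) n
  change (∑ g : G, glAct 𝔽 d g u) * r = ∑ h : G, glAct 𝔽 d h⁻¹ (u * glAct 𝔽 d h r)
  rw [Finset.sum_mul]
  refine Fintype.sum_equiv (Equiv.inv G) _ _ fun g => ?_
  rw [Equiv.inv_apply, InvMemClass.coe_inv, inv_inv, map_mul, ← AlgHom.comp_apply, ← glAct_mul,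
    mul_inv_cancel, glAct_one, AlgHom.id_apply]

/-- **Proposition.** For every `i ≥ 1`, the annihilator `J_i = ann_S H^i(G, R)` is a
nonzero ideal of `S`. -/
theorem annJ_ne_bot (i : ℕ) (hi : 1 ≤ i) : annJ 𝔽 d G i ≠ ⊥ := by
  have := Fintype.ofFinite G
  obtain ⟨n, rfl⟩ := Nat.exists_eq_add_of_le' hi
  obtain ⟨u, hu⟩ := exists_sum_glAct_ne_zero 𝔽 d G
  exact (Submodule.ne_bot_iff _).mpr
    ⟨_, invTransfer_mem_annJ 𝔽 d G u n, fun h => hu (congrArg Subtype.val h)⟩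

end
end

section
/- Fix $i \geq 0$. There exist $\mathbb{F}_q$-linear maps $\mathcal{Q}^m : H^i(G, R) \to H^i(G, R)$ for all $m \geq 0$, with $\mathcal{Q}^0$ the identity, such that for every $s \in S$ and every $\alpha \in H^i(G, R)$ one has the Cartan-type formula $\mathcal{Q}^m(s\alpha) = \sum_{a+b=m} \mathcal{P}^a(s)\,\mathcal{Q}^b(\alpha)$. -/
set_option linter.unusedSectionVars false

open MvPolynomial

noncomputable section

variable (𝔽 : Type) [Field 𝔽] [Fintype 𝔽] [DecidableEq 𝔽] (d : ℕ)

variable (G : Subgroup (GL (Fin d) 𝔽))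

/-- The total Steenrod operation `P(ξ) : R → R[ξ]`, the `𝔽_q`-algebra homomorphism
determined by `P(ξ)(v) = v + v^q ξ` for linear forms `v` (here on the basis `X i`). -/
def steenrodTotal : PolyR 𝔽 d →ₐ[𝔽] Polynomial (PolyR 𝔽 d) :=
  aeval fun i =>
    Polynomial.C (X i) + Polynomial.C ((X i : PolyR 𝔽 d) ^ Fintype.card 𝔽) * Polynomial.X

/-- The Steenrod reduced power operation `𝒫^m : R → R`, defined by
`P(ξ)(f) = ∑ᵢ 𝒫^i(f) ξ^i`. -/
def steenrodP (m : ℕ) (f : PolyR 𝔽 d) : PolyR 𝔽 d := (steenrodTotal 𝔽 d f).coeff m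

lemma linForm_pow_card (c : Fin d → 𝔽) :
    (linForm 𝔽 d c) ^ Fintype.card 𝔽 =
      ∑ j, MvPolynomial.C (c j) * (X j : PolyR 𝔽 d) ^ Fintype.card 𝔽 := by
  obtain ⟨n, hp, hcard⟩ := FiniteField.card 𝔽 (ringChar 𝔽)
  haveI : Fact (ringChar 𝔽).Prime := ⟨hp⟩
  haveI : ExpChar (PolyR 𝔽 d) (ringChar 𝔽) := .prime hp
  have h := map_sum (iterateFrobenius (PolyR 𝔽 d) (ringChar 𝔽) n)
    (fun i => MvPolynomial.C (c i) * X i) Finset.univ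
  simp only [iterateFrobenius_def] at h
  rw [linForm, hcard, h]
  refine Finset.sum_congr rfl fun j _ => ?_
  rw [mul_pow, ← map_pow, ← hcard, FiniteField.pow_card]

lemma steenrodTotal_linForm (c : Fin d → 𝔽) :
    steenrodTotal 𝔽 d (linForm 𝔽 d c) =
      Polynomial.C (linForm 𝔽 d c) +
        Polynomial.C ((linForm 𝔽 d c) ^ Fintype.card 𝔽) * Polynomial.X := by
  rw [linForm_pow_card]
  rw [linForm, map_sum]
  simp only [map_mul, steenrodTotal, aeval_C, aeval_X, MvPolynomial.algebraMap_eq,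
    Polynomial.algebraMap_apply]
  simp only [mul_add, ← Polynomial.C_mul, Finset.sum_add_distrib, ← mul_assoc, ← Finset.sum_mul,
    ← map_sum]

/-- The total Steenrod operation commutes with the `GL(V)`-action (acting trivially on `ξ`,
i.e. coefficientwise on `R[ξ]`). -/
lemma map_glAct_steenrodTotal (g : GL (Fin d) 𝔽) (r : PolyR 𝔽 d) :
    Polynomial.map (glAct 𝔽 d g).toRingHom (steenrodTotal 𝔽 d r) =
      steenrodTotal 𝔽 d (glAct 𝔽 d g r) := by
  have key : (Polynomial.mapAlgHom (glAct 𝔽 d g)).comp (steenrodTotal 𝔽 d) =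
      (steenrodTotal 𝔽 d).comp (glAct 𝔽 d g) := by
    apply MvPolynomial.algHom_ext
    intro i
    simp only [AlgHom.comp_apply, steenrodTotal, aeval_X]
    rw [show (Polynomial.mapAlgHom (glAct 𝔽 d g))
          (Polynomial.C (X i) + Polynomial.C ((X i : PolyR 𝔽 d) ^ Fintype.card 𝔽) * Polynomial.X)
        = Polynomial.map (glAct 𝔽 d g).toRingHom
          (Polynomial.C (X i) + Polynomial.C ((X i : PolyR 𝔽 d) ^ Fintype.card 𝔽) * Polynomial.X)
        from rfl]
    simp only [Polynomial.map_add, Polynomial.map_mul, Polynomial.map_C, Polynomial.map_X]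
    show Polynomial.C (glAct 𝔽 d g (X i)) +
        Polynomial.C (glAct 𝔽 d g ((X i : PolyR 𝔽 d) ^ Fintype.card 𝔽)) * Polynomial.X =
      (steenrodTotal 𝔽 d) (glAct 𝔽 d g (X i))
    rw [map_pow, show glAct 𝔽 d g (X i) =
        linForm 𝔽 d fun j => ((g⁻¹ : GL (Fin d) 𝔽) : Matrix (Fin d) (Fin d) 𝔽) i j from
      aeval_X _ i]
    rw [steenrodTotal_linForm]
  exact congrFun (congrArg (fun φ => φ.toFun) key) r

/-- The Steenrod operations preserve the invariant ring. -/
lemma steenrodP_mem_invS (G : Subgroup (GL (Fin d) 𝔽)) (m : ℕ) (s : PolyR 𝔽 d)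
    (hs : s ∈ invS 𝔽 d G) : steenrodP 𝔽 d m s ∈ invS 𝔽 d G := by
  rw [mem_invS] at hs ⊢
  intro g hg
  have h1 := map_glAct_steenrodTotal 𝔽 d g s
  rw [hs g hg] at h1
  have h2 : glAct 𝔽 d g (steenrodP 𝔽 d m s) =
      (Polynomial.map (glAct 𝔽 d g).toRingHom (steenrodTotal 𝔽 d s)).coeff m := by
    rw [Polynomial.coeff_map]
    rfl
  rw [h2, h1]
  rfl

/-- The Steenrod operation `𝒫^m` restricted to the invariant ring `S = R^G`. -/
def steenrodPS (m : ℕ) (s : invS 𝔽 d G) : invS 𝔽 d G :=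
  ⟨steenrodP 𝔽 d m (s : PolyR 𝔽 d), steenrodP_mem_invS 𝔽 d G m _ s.2⟩

/-! The total operation `P(ξ)` is a ring homomorphism commuting with `GL(V)`, so each `𝒫^m` is
an additive, `G`-equivariant map `R → R` obeying the Cartan formula, with `𝒫^0 = id`. Applied
valuewise to inhomogeneous cochains, an additive equivariant map commutes with the differential,
hence acts on cocycles and coboundaries and descends to `H^i(G, R)`. Since `S` acts valuewise on
cochains, the Cartan formula for `𝒫^m` on `R` becomes the Cartan formula for `𝒬^m`. -/

open CategoryTheory

set_option synthInstance.maxHeartbeats 80000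

namespace CategoryTheory.ShortComplex

variable {R : Type*} [Ring R] (S : ShortComplex (ModuleCat R))

def moduleCatHomologyπ : LinearMap.ker S.g.hom →ₗ[R] S.homology :=
  (S.moduleCatLeftHomologyData.π ≫ S.moduleCatHomologyIso.inv).hom

lemma moduleCatHomologyπ_surjective : Function.Surjective S.moduleCatHomologyπ :=
  (ModuleCat.epi_iff_surjective _).1 inferInstance

lemma ker_moduleCatHomologyπ :
    LinearMap.ker S.moduleCatHomologyπ = LinearMap.range S.moduleCatToCycles := by
  ext z
  exact (map_eq_zero_iff S.moduleCatHomologyIso.inv.hom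
    ((ModuleCat.mono_iff_injective _).1 inferInstance)).trans (Submodule.Quotient.mk_eq_zero _)

variable {S} (T₁ : S.X₁ →+ S.X₁) (T₂ : S.X₂ →+ S.X₂) (T₃ : S.X₃ →+ S.X₃)

def cyclesAddMap (hg : ∀ x, S.g (T₂ x) = T₃ (S.g x)) :
    LinearMap.ker S.g.hom →+ LinearMap.ker S.g.hom :=
  (T₂.comp (LinearMap.ker S.g.hom).subtype.toAddMonoidHom).codRestrict
    (LinearMap.ker S.g.hom).toAddSubgroup fun z => by
      simp [hg, LinearMap.mem_ker.1 z.2]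

lemma cyclesAddMap_moduleCatToCycles (hf : ∀ x, S.f (T₁ x) = T₂ (S.f x))
    (hg : ∀ x, S.g (T₂ x) = T₃ (S.g x)) (x : S.X₁) :
    cyclesAddMap T₂ T₃ hg (S.moduleCatToCycles x) = S.moduleCatToCycles (T₁ x) :=
  Subtype.ext (hf x).symm

/-- The `Tₖ` need not be `R`-linear, so this cannot be `ShortComplex.homologyMap`; it is the map
induced on the concrete homology `ker g ⧸ im f`. -/
def homologyAddMap (hf : ∀ x, S.f (T₁ x) = T₂ (S.f x))
    (hg : ∀ x, S.g (T₂ x) = T₃ (S.g x)) : S.homology →+ S.homology :=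
  AddMonoidHom.liftOfSurjective S.moduleCatHomologyπ.toAddMonoidHom
    S.moduleCatHomologyπ_surjective
    ⟨S.moduleCatHomologyπ.toAddMonoidHom.comp (cyclesAddMap T₂ T₃ hg), by
      rintro _ hz
      obtain ⟨x, rfl⟩ : _ ∈ LinearMap.range S.moduleCatToCycles := by
        rwa [← ker_moduleCatHomologyπ]
      simp only [AddMonoidHom.mem_ker, AddMonoidHom.coe_comp, Function.comp_apply,
        LinearMap.toAddMonoidHom_coe, cyclesAddMap_moduleCatToCycles T₁ T₂ T₃ hf hg]
      rw [← LinearMap.mem_ker, ker_moduleCatHomologyπ]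
      exact LinearMap.mem_range_self _ _⟩

lemma homologyAddMap_moduleCatHomologyπ (hf : ∀ x, S.f (T₁ x) = T₂ (S.f x))
    (hg : ∀ x, S.g (T₂ x) = T₃ (S.g x)) (z : LinearMap.ker S.g.hom) :
    homologyAddMap T₁ T₂ T₃ hf hg (S.moduleCatHomologyπ z) =
      S.moduleCatHomologyπ (cyclesAddMap T₂ T₃ hg z) :=
  AddMonoidHom.liftOfRightInverse_comp_apply _ _ _ _ z

end CategoryTheory.ShortComplex

universe u

lemma inhomogeneousCochains.d_compLeft {k G : Type u} [CommRing k] [Group G] {A : Rep k G}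
    (f : A →+ A) (hf : ∀ g x, f (A.ρ g x) = A.ρ g (f x)) (n : ℕ) (φ : (Fin n → G) → A) :
    inhomogeneousCochains.d A n (f.compLeft _ φ) =
      f.compLeft _ (inhomogeneousCochains.d A n φ) := by
  ext g
  have hsign (j : ℕ) (x : A) : f ((-1 : k) ^ j • x) = (-1 : k) ^ j • f x := by
    rw [show (-1 : k) ^ j = ((-1 : ℤ) ^ j : ℤ) by push_cast; rfl, Int.cast_smul_eq_zsmul,
      Int.cast_smul_eq_zsmul, map_zsmul]
  simp [inhomogeneousCochains.d_hom_apply, hf, hsign]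

namespace groupCohomology

variable {k G : Type u} [CommRing k] [Group G] {A : Rep k G} (f : A →+ A)

lemma inhomogeneousCochains.d_compLeft (hf : ∀ g x, f (A.ρ g x) = A.ρ g (f x)) (i j : ℕ)
    (φ : (inhomogeneousCochains A).X i) :
    (inhomogeneousCochains A).d i j (f.compLeft _ φ) =
      f.compLeft _ ((inhomogeneousCochains A).d i j φ) := by
  by_cases hij : i + 1 = j
  · subst hij
    rw [inhomogeneousCochains.d_def]
    exact _root_.inhomogeneousCochains.d_compLeft f hf i φ
  · rw [HomologicalComplex.shape _ _ _ hij]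
    exact (map_zero (f.compLeft _)).symm

def addMap (hf : ∀ g x, f (A.ρ g x) = A.ρ g (f x)) (n : ℕ) :
    groupCohomology A n →+ groupCohomology A n :=
  ShortComplex.homologyAddMap (f.compLeft _) (f.compLeft _) (f.compLeft _)
    (inhomogeneousCochains.d_compLeft f hf _ _) (inhomogeneousCochains.d_compLeft f hf _ _)

lemma addMap_moduleCatHomologyπ (hf : ∀ g x, f (A.ρ g x) = A.ρ g (f x)) (n : ℕ)
    (z : LinearMap.ker ((inhomogeneousCochains A).sc n).g.hom) :
    addMap f hf n (((inhomogeneousCochains A).sc n).moduleCatHomologyπ z) =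
      ((inhomogeneousCochains A).sc n).moduleCatHomologyπ
        (ShortComplex.cyclesAddMap _ (f.compLeft _)
          (inhomogeneousCochains.d_compLeft f hf _ _) z) :=
  ShortComplex.homologyAddMap_moduleCatHomologyπ _ _ _ _ _ z

end groupCohomology

lemma steenrodP_zero : steenrodP 𝔽 d 0 = id := by
  have h : ((Polynomial.aeval (0 : PolyR 𝔽 d)).restrictScalars 𝔽).comp (steenrodTotal 𝔽 d) =
      AlgHom.id 𝔽 (PolyR 𝔽 d) :=
    MvPolynomial.algHom_ext fun j => by simp [steenrodTotal]
  funext f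
  simpa [steenrodP, Polynomial.coeff_zero_eq_aeval_zero] using congr($h f)

lemma steenrodP_mul (m : ℕ) (f g : PolyR 𝔽 d) :
    steenrodP 𝔽 d m (f * g) =
      ∑ ab ∈ Finset.HasAntidiagonal.antidiagonal m,
        steenrodP 𝔽 d ab.1 f * steenrodP 𝔽 d ab.2 g := by
  rw [steenrodP, map_mul, Polynomial.coeff_mul]
  rfl

lemma steenrodP_C (m : ℕ) (c : 𝔽) :
    steenrodP 𝔽 d m (C c) = if m = 0 then C c else 0 := by
  rw [steenrodP, ← algebraMap_eq, AlgHom.commutes, Polynomial.algebraMap_apply, Polynomial.coeff_C]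

lemma steenrodP_glAct (m : ℕ) (g : GL (Fin d) 𝔽) (f : PolyR 𝔽 d) :
    steenrodP 𝔽 d m (glAct 𝔽 d g f) = glAct 𝔽 d g (steenrodP 𝔽 d m f) := by
  rw [steenrodP, ← map_glAct_steenrodTotal, Polynomial.coeff_map]
  rfl

def steenrodPAddHom (m : ℕ) : PolyR 𝔽 d →+ PolyR 𝔽 d :=
  AddMonoidHom.mk' (steenrodP 𝔽 d m) fun f g => by simp [steenrodP]

lemma steenrodPAddHom_ρ (m : ℕ) (g : G) (f : Rep.of (invRep 𝔽 d G)) :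
    steenrodPAddHom 𝔽 d m ((Rep.of (invRep 𝔽 d G)).ρ g f) =
      (Rep.of (invRep 𝔽 d G)).ρ g (steenrodPAddHom 𝔽 d m f) :=
  steenrodP_glAct 𝔽 d m g f

lemma steenrodPS_algebraMap (m : ℕ) (c : 𝔽) :
    steenrodPS 𝔽 d G m (algebraMap 𝔽 (invS 𝔽 d G) c) =
      if m = 0 then algebraMap 𝔽 (invS 𝔽 d G) c else 0 := by
  apply Subtype.ext
  rw [apply_ite Subtype.val]
  exact steenrodP_C 𝔽 d m c

abbrev cocyclesGR (i : ℕ) :=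
  LinearMap.ker ((groupCohomology.inhomogeneousCochains (Rep.of (invRep 𝔽 d G))).sc i).g.hom

def cocycleClass (i : ℕ) : cocyclesGR 𝔽 d G i →ₗ[invS 𝔽 d G] cohGR 𝔽 d G i :=
  ShortComplex.moduleCatHomologyπ _

lemma cocycleClass_surjective (i : ℕ) : Function.Surjective (cocycleClass 𝔽 d G i) :=
  ShortComplex.moduleCatHomologyπ_surjective _

def steenrodCocycle (i m : ℕ) : cocyclesGR 𝔽 d G i →+ cocyclesGR 𝔽 d G i :=
  ShortComplex.cyclesAddMap _ ((steenrodPAddHom 𝔽 d m).compLeft _)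
    (groupCohomology.inhomogeneousCochains.d_compLeft _ (steenrodPAddHom_ρ 𝔽 d G m) _ _)

lemma steenrodCocycle_apply (i m : ℕ) (z : cocyclesGR 𝔽 d G i) (x : Fin i → G) :
    (steenrodCocycle 𝔽 d G i m z).1 x = steenrodP 𝔽 d m (z.1 x) :=
  rfl

lemma steenrodCocycle_zero_apply (i : ℕ) (z : cocyclesGR 𝔽 d G i) :
    steenrodCocycle 𝔽 d G i 0 z = z :=
  Subtype.ext <| funext fun x => by rw [steenrodCocycle_apply, steenrodP_zero, id]

lemma steenrodCocycle_smul (i m : ℕ) (s : invS 𝔽 d G) (z : cocyclesGR 𝔽 d G i) :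
    steenrodCocycle 𝔽 d G i m (s • z) =
      ∑ ab ∈ Finset.HasAntidiagonal.antidiagonal m,
        steenrodPS 𝔽 d G ab.1 s • steenrodCocycle 𝔽 d G i ab.2 z := by
  apply Subtype.ext
  funext x
  simp only [steenrodCocycle_apply, Submodule.coe_sum, Submodule.coe_smul]
  -- the cochain module is a `ModuleCat` object, not syntactically a function type
  erw [Finset.sum_apply]
  exact steenrodP_mul 𝔽 d m s (z.1 x)

def steenrodQ (i m : ℕ) : cohGR 𝔽 d G i →+ cohGR 𝔽 d G i :=
  groupCohomology.addMap (steenrodPAddHom 𝔽 d m) (steenrodPAddHom_ρ 𝔽 d G m) i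

lemma steenrodQ_cocycleClass (i m : ℕ) (z : cocyclesGR 𝔽 d G i) :
    steenrodQ 𝔽 d G i m (cocycleClass 𝔽 d G i z) =
      cocycleClass 𝔽 d G i (steenrodCocycle 𝔽 d G i m z) :=
  groupCohomology.addMap_moduleCatHomologyπ _ _ _ z

lemma steenrodQ_zero (i : ℕ) : steenrodQ 𝔽 d G i 0 = AddMonoidHom.id _ := by
  ext α
  obtain ⟨z, rfl⟩ := cocycleClass_surjective 𝔽 d G i α
  rw [steenrodQ_cocycleClass, steenrodCocycle_zero_apply, AddMonoidHom.id_apply]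

lemma steenrodQ_smul (i m : ℕ) (s : invS 𝔽 d G) (α : cohGR 𝔽 d G i) :
    steenrodQ 𝔽 d G i m (s • α) =
      ∑ ab ∈ Finset.HasAntidiagonal.antidiagonal m,
        steenrodPS 𝔽 d G ab.1 s • steenrodQ 𝔽 d G i ab.2 α := by
  obtain ⟨z, rfl⟩ := cocycleClass_surjective 𝔽 d G i α
  rw [← map_smul, steenrodQ_cocycleClass, steenrodCocycle_smul, map_sum]
  simp_rw [map_smul, steenrodQ_cocycleClass]

lemma steenrodQ_algebraMap_smul (i m : ℕ) (c : 𝔽) (α : cohGR 𝔽 d G i) :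
    steenrodQ 𝔽 d G i m (algebraMap 𝔽 (invS 𝔽 d G) c • α) =
      algebraMap 𝔽 (invS 𝔽 d G) c • steenrodQ 𝔽 d G i m α := by
  rw [steenrodQ_smul, Finset.sum_eq_single (0, m), steenrodPS_algebraMap, if_pos rfl]
  · rintro ⟨a, b⟩ hab hne
    have ha : a ≠ 0 := by
      rintro rfl
      exact hne (by simpa using hab)
    rw [steenrodPS_algebraMap, if_neg ha, zero_smul]
  · exact fun h => absurd (by simp) h

/-- **Theorem.** For each `i ≥ 0` there exist `𝔽_q`-linear operators
`𝒬^m : H^i(G, R) → H^i(G, R)` (`m ≥ 0`), with `𝒬^0` the identity, satisfying the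
Cartan-type formula `𝒬^m(s • α) = ∑_{a+b=m} 𝒫^a(s) • 𝒬^b(α)` for `s ∈ S`,
`α ∈ H^i(G, R)`. -/
theorem exists_steenrod_operators_on_groupCohomology (i : ℕ) :
    ∃ Q : ℕ → ((cohGR 𝔽 d G i) →+ (cohGR 𝔽 d G i)),
      Q 0 = AddMonoidHom.id _ ∧
      (∀ (m : ℕ) (c : 𝔽) (α : cohGR 𝔽 d G i),
        Q m (algebraMap 𝔽 (invS 𝔽 d G) c • α) = algebraMap 𝔽 (invS 𝔽 d G) c • Q m α) ∧
      (∀ (m : ℕ) (s : invS 𝔽 d G) (α : cohGR 𝔽 d G i),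
        Q m (s • α) = ∑ ab ∈ Finset.HasAntidiagonal.antidiagonal m, steenrodPS 𝔽 d G ab.1 s • Q ab.2 α) :=
  ⟨steenrodQ 𝔽 d G i, steenrodQ_zero 𝔽 d G i, steenrodQ_algebraMap_smul 𝔽 d G i,
    steenrodQ_smul 𝔽 d G i⟩

end
end
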